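/- Let ξ be a constrained smooth parameter on ℝ^(2D) and define χ₃^M := −(1/12) Σ_P ((ξ·∂)ξ^P)(∂^M ξ_P) and χ₄^M := (1/24) Σ_P ((ξ·∂)²ξ^P)(∂^M ξ_P). Then at every point ½·[ξ, χ₃]_C = −χ₄. (This is the cancellation responsible for the absence of a quartic-order correction in ξ'(ξ).) -/

import Mathlib

open scoped BigOperators

/-- Index set of the doubled space ℝ^(2D). -/
abbrev DoubledIdx (D : ℕ) := Fin D ⊕ Fin D

/-- The doubled space ℝ^(2D). -/
abbrev DoubledSpace (D : ℕ) := DoubledIdx D → ℝ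

/-- Partial derivative ∂_N f at x. -/
noncomputable def pd {D : ℕ} (f : DoubledSpace D → ℝ) (N : DoubledIdx D)
    (x : DoubledSpace D) : ℝ :=
  fderiv ℝ f x (Pi.single N 1)

/-- The constant O(D,D) metric η. -/
def eta (D : ℕ) : DoubledIdx D → DoubledIdx D → ℝ
  | Sum.inl i, Sum.inr j => if i = j then 1 else 0
  | Sum.inr i, Sum.inl j => if i = j then 1 else 0
  | _, _ => 0

/-- Raised-index partial derivative ∂^M f := Σ_N η^{MN} ∂_N f. -/
noncomputable def pdUp {D : ℕ} (f : DoubledSpace D → ℝ) (M : DoubledIdx D)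
    (x : DoubledSpace D) : ℝ :=
  ∑ N, eta D M N * pd f N x

/-- A constrained function: smooth and depending only on the first (inl) block. -/
def IsConstrained {D : ℕ} (f : DoubledSpace D → ℝ) : Prop :=
  ContDiff ℝ (⊤ : ℕ∞) f ∧
    ∀ x y : DoubledSpace D, (∀ i, x (Sum.inl i) = y (Sum.inl i)) → f x = f y

/-- A parameter (generalized vector field) on the doubled space, components ξ^M. -/
abbrev Param (D : ℕ) := DoubledIdx D → DoubledSpace D → ℝ

/-- A constrained parameter: all components constrained. -/
def IsConstrainedParam {D : ℕ} (ξ : Param D) : Prop := ∀ M, IsConstrained (ξ M)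

/-- A quasi-trivial parameter: δ^M = Σ_i ρ_i ∂^M σ_i. -/
def IsQuasiTrivial {D : ℕ} (δ : Param D) : Prop :=
  ∃ (r : ℕ) (ρ σ : Fin r → (DoubledSpace D → ℝ)),
    (∀ i, IsConstrained (ρ i)) ∧ (∀ i, IsConstrained (σ i)) ∧
    ∀ M x, δ M x = ∑ i, ρ i x * pdUp (σ i) M x

/-- ∂^M ξ_P := Σ_{Q,R} η^{MQ} η_{PR} ∂_Q ξ^R. -/
noncomputable def pdUpLow {D : ℕ} (ξ : Param D) (M P : DoubledIdx D)
    (x : DoubledSpace D) : ℝ :=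
  ∑ Q, ∑ R, eta D M Q * eta D P R * pd (ξ R) Q x

/-- Generalized Lie derivative (L̂_ξ V)_M. -/
noncomputable def glie {D : ℕ} (ξ V : Param D) : Param D :=
  fun M x => (∑ P, ξ P x * pd (V M) P x)
    + ∑ K, (pd (ξ K) M x - pdUpLow ξ K M x) * V K x

/-- η-transpose of a matrix: t(X)_M{}^N := Σ_{P,Q} η_{MP} η^{NQ} X_Q{}^P. -/
def etaT {D : ℕ} (X : Matrix (DoubledIdx D) (DoubledIdx D) ℝ) :
    Matrix (DoubledIdx D) (DoubledIdx D) ℝ :=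
  Matrix.of fun M N => ∑ P, ∑ Q, eta D M P * eta D N Q * X Q P

/-- The C-bracket of two parameters. -/
noncomputable def cbracket {D : ℕ} (ξ₁ ξ₂ : Param D) : Param D :=
  fun M x => (∑ P, ξ₁ P x * pd (ξ₂ M) P x) - (∑ P, ξ₂ P x * pd (ξ₁ M) P x)
    - (1/2) * ∑ P, (ξ₁ P x * pdUpLow ξ₂ M P x - ξ₂ P x * pdUpLow ξ₁ M P x)

/-- Directional derivative (ξ·∂)f. -/
noncomputable def xid {D : ℕ} (ξ : Param D) (f : DoubledSpace D → ℝ)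
    (x : DoubledSpace D) : ℝ :=
  ∑ P, ξ P x * pd f P x

/-- Iterated directional derivative (ξ·∂)^n f. -/
noncomputable def xidIter {D : ℕ} (ξ : Param D) : ℕ → (DoubledSpace D → ℝ) →
    DoubledSpace D → ℝ
  | 0, f => f
  | n+1, f => xid ξ (xidIter ξ n f)

namespace Aux16

variable {D : ℕ}

/-- projection onto the inl block -/
noncomputable def projL (D : ℕ) : DoubledSpace D →L[ℝ] DoubledSpace D :=
  LinearMap.toContinuousLinearMap
  { toFun := fun x => Sum.elim (fun i => x (Sum.inl i)) (fun _ => 0)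
    map_add' := by intro x y; funext M; cases M <;> simp
    map_smul' := by intro c x; funext M; cases M <;> simp }

lemma projL_apply_inl (x : DoubledSpace D) (i : Fin D) :
    projL D x (Sum.inl i) = x (Sum.inl i) := rfl

lemma projL_apply_inr (x : DoubledSpace D) (i : Fin D) :
    projL D x (Sum.inr i) = 0 := rfl

lemma constrained_comp {f : DoubledSpace D → ℝ} (hf : IsConstrained f) :
    f = fun x => f (projL D x) :=
  funext fun x => hf.2 x (projL D x) (fun i => (projL_apply_inl x i).symm)

lemma fderiv_constrained {f : DoubledSpace D → ℝ} (hf : IsConstrained f) (x : DoubledSpace D) :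
    fderiv ℝ f x = (fderiv ℝ f (projL D x)).comp (projL D : DoubledSpace D →L[ℝ] DoubledSpace D) := by
  have hd : DifferentiableAt ℝ f (projL D x) :=
    (hf.1.differentiable (by simp)).differentiableAt
  conv_lhs => rw [constrained_comp hf]
  have : (fun y => f (projL D y)) = f ∘ (projL D) := rfl
  rw [this, fderiv_comp x hd ((projL D).differentiableAt)]
  rw [ContinuousLinearMap.fderiv]

lemma pd_inr {f : DoubledSpace D → ℝ} (hf : IsConstrained f) (i : Fin D) (x : DoubledSpace D) :
    pd f (Sum.inr i) x = 0 := by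
  unfold pd
  rw [fderiv_constrained hf]
  have h0 : (projL D) (Pi.single (Sum.inr i) (1:ℝ)) = 0 := by
    funext M
    cases M with
    | inl j => simp [projL_apply_inl, Pi.single_apply]
    | inr j => simp [projL_apply_inr]
  simp [h0]

lemma pd_congr {f : DoubledSpace D → ℝ} (hf : IsConstrained f) {x y : DoubledSpace D}
    (h : ∀ i, x (Sum.inl i) = y (Sum.inl i)) (N : DoubledIdx D) : pd f N x = pd f N y := by
  unfold pd
  rw [fderiv_constrained hf x, fderiv_constrained hf y]
  have : projL D x = projL D y := by
    funext M; cases M with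
    | inl j => simpa [projL_apply_inl] using h j
    | inr j => simp [projL_apply_inr]
  rw [this]

lemma IsConstrained.pd' {f : DoubledSpace D → ℝ} (hf : IsConstrained f) (N : DoubledIdx D) :
    IsConstrained (pd f N) := by
  constructor
  · have h1 : ContDiff ℝ (⊤ : ℕ∞) (fderiv ℝ f) := hf.1.fderiv_right (by simp)
    exact h1.clm_apply contDiff_const
  · intro x y h; exact pd_congr hf h N

lemma IsConstrained.mul' {f g : DoubledSpace D → ℝ} (hf : IsConstrained f) (hg : IsConstrained g) :
    IsConstrained (fun x => f x * g x) :=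
  ⟨hf.1.mul hg.1, fun x y h => by simp only []; rw [hf.2 x y h, hg.2 x y h]⟩

lemma IsConstrained.add' {f g : DoubledSpace D → ℝ} (hf : IsConstrained f) (hg : IsConstrained g) :
    IsConstrained (fun x => f x + g x) :=
  ⟨hf.1.add hg.1, fun x y h => by simp only []; rw [hf.2 x y h, hg.2 x y h]⟩

lemma IsConstrained.sum' {ι : Type*} [Fintype ι] {F : ι → DoubledSpace D → ℝ}
    (h : ∀ i, IsConstrained (F i)) : IsConstrained (fun x => ∑ i, F i x) :=
  ⟨ContDiff.sum fun i _ => (h i).1,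
   fun x y hxy => Finset.sum_congr rfl fun i _ => (h i).2 x y hxy⟩

lemma IsConstrained.constMul {f : DoubledSpace D → ℝ} (c : ℝ) (hf : IsConstrained f) :
    IsConstrained (fun x => c * f x) :=
  ⟨contDiff_const.mul hf.1, fun x y h => by simp only []; rw [hf.2 x y h]⟩

lemma isConstrained_const (c : ℝ) : IsConstrained (fun _ : DoubledSpace D => c) :=
  ⟨contDiff_const, fun _ _ _ => rfl⟩

lemma pd_mul {f g : DoubledSpace D → ℝ} (hf : ContDiff ℝ (⊤ : ℕ∞) f) (hg : ContDiff ℝ (⊤ : ℕ∞) g)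
    (N : DoubledIdx D) (x : DoubledSpace D) :
    pd (fun y => f y * g y) N x = pd f N x * g x + f x * pd g N x := by
  unfold pd
  rw [fderiv_fun_mul (hf.differentiable (by simp)).differentiableAt
      (hg.differentiable (by simp)).differentiableAt]
  simp [smul_eq_mul]
  ring

lemma pd_sum {ι : Type*} [Fintype ι] {F : ι → DoubledSpace D → ℝ}
    (h : ∀ i, ContDiff ℝ (⊤ : ℕ∞) (F i)) (N : DoubledIdx D) (x : DoubledSpace D) :
    pd (fun y => ∑ i, F i y) N x = ∑ i, pd (F i) N x := by
  unfold pd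
  rw [fderiv_fun_sum fun i _ => ((h i).differentiable (by simp)).differentiableAt]
  simp

lemma pd_const_mul {f : DoubledSpace D → ℝ} (hf : ContDiff ℝ (⊤ : ℕ∞) f) (c : ℝ)
    (N : DoubledIdx D) (x : DoubledSpace D) :
    pd (fun y => c * f y) N x = c * pd f N x := by
  unfold pd
  rw [fderiv_const_mul (hf.differentiable (by simp)).differentiableAt]
  simp

lemma pd_zero (N : DoubledIdx D) (x : DoubledSpace D) :
    pd (fun _ : DoubledSpace D => (0:ℝ)) N x = 0 := by
  simp [pd]

lemma pd_comm {f : DoubledSpace D → ℝ} (hf : ContDiff ℝ (⊤ : ℕ∞) f) (M N : DoubledIdx D)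
    (x : DoubledSpace D) :
    pd (pd f M) N x = pd (pd f N) M x := by
  have hdf : DifferentiableAt ℝ (fderiv ℝ f) x :=
    ((hf.fderiv_right (m := 1) (by exact WithTop.coe_le_coe.mpr le_top)).differentiable (by simp)).differentiableAt
  have hsymm := (hf.contDiffAt (x := x)).isSymmSndFDerivAt (by rw [minSmoothness_of_isRCLikeNormedField]; exact WithTop.coe_le_coe.mpr le_top)
  unfold pd
  rw [fderiv_clm_apply hdf (differentiableAt_const _),
      fderiv_clm_apply hdf (differentiableAt_const _)]
  simp only [fderiv_fun_const, Pi.zero_apply, ContinuousLinearMap.comp_zero,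
    zero_add, ContinuousLinearMap.add_apply, ContinuousLinearMap.zero_apply,
    ContinuousLinearMap.flip_apply]
  exact hsymm _ _

end Aux16

namespace Aux16

variable {D : ℕ}

def dual : DoubledIdx D → DoubledIdx D
  | Sum.inl i => Sum.inr i
  | Sum.inr i => Sum.inl i

lemma pdUpLow_inl {ζ : Param D} (hζ : IsConstrainedParam ζ) (i : Fin D)
    (P : DoubledIdx D) (x : DoubledSpace D) : pdUpLow ζ (Sum.inl i) P x = 0 := by
  unfold pdUpLow
  apply Finset.sum_eq_zero
  intro Q _
  apply Finset.sum_eq_zero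
  intro R _
  cases Q with
  | inl q => simp [eta]
  | inr q => rw [pd_inr (hζ R)]; ring

lemma pdUpLow_inr (ζ : Param D) (m : Fin D) (P : DoubledIdx D) (x : DoubledSpace D) :
    pdUpLow ζ (Sum.inr m) P x = pd (ζ (dual P)) (Sum.inl m) x := by
  unfold pdUpLow
  rw [Fintype.sum_sum_type]
  have h2 : ∑ q : Fin D, ∑ R, eta D (Sum.inr m) (Sum.inr q) * eta D P R * pd (ζ R) (Sum.inr q) x
      = 0 := by
    apply Finset.sum_eq_zero; intro q _
    apply Finset.sum_eq_zero; intro R _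
    simp [eta]
  rw [h2, add_zero]
  have h1 : ∀ q : Fin D, ∑ R, eta D (Sum.inr m) (Sum.inl q) * eta D P R * pd (ζ R) (Sum.inl q) x
      = if m = q then ∑ R, eta D P R * pd (ζ R) (Sum.inl q) x else 0 := by
    intro q
    by_cases h : m = q <;> simp [eta, h, Finset.mul_sum, mul_assoc]
  simp only [h1]
  rw [Finset.sum_ite_eq]
  simp only [Finset.mem_univ, if_true]
  rw [Fintype.sum_sum_type]
  cases P with
  | inl p =>
      have e1 : ∀ r : Fin D, eta D (Sum.inl p) (Sum.inl r) * pd (ζ (Sum.inl r)) (Sum.inl m) x = 0 := by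
        intro r; simp [eta]
      have e2 : ∀ r : Fin D, eta D (Sum.inl p) (Sum.inr r) * pd (ζ (Sum.inr r)) (Sum.inl m) x
          = if p = r then pd (ζ (Sum.inr r)) (Sum.inl m) x else 0 := by
        intro r; by_cases h : p = r <;> simp [eta, h]
      simp only [e1, e2, Finset.sum_const_zero, zero_add, Finset.sum_ite_eq,
        Finset.mem_univ, if_true]
      rfl
  | inr p =>
      have e1 : ∀ r : Fin D, eta D (Sum.inr p) (Sum.inl r) * pd (ζ (Sum.inl r)) (Sum.inl m) x
          = if p = r then pd (ζ (Sum.inl r)) (Sum.inl m) x else 0 := by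
        intro r; by_cases h : p = r <;> simp [eta, h]
      have e2 : ∀ r : Fin D, eta D (Sum.inr p) (Sum.inr r) * pd (ζ (Sum.inr r)) (Sum.inl m) x = 0 := by
        intro r; simp [eta]
      simp only [e1, e2, Finset.sum_const_zero, add_zero, Finset.sum_ite_eq,
        Finset.mem_univ, if_true]
      rfl

/-- The operator L = ξ·∂ for constrained things, written over the inl block. -/
noncomputable def Lop (ξ : Param D) (f : DoubledSpace D → ℝ) : DoubledSpace D → ℝ :=
  fun x => ∑ i, ξ (Sum.inl i) x * pd f (Sum.inl i) x

lemma isConstrained_Lop {ξ : Param D} (hξ : IsConstrainedParam ξ)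
    {f : DoubledSpace D → ℝ} (hf : IsConstrained f) : IsConstrained (Lop ξ f) :=
  IsConstrained.sum' fun i =>
    IsConstrained.mul' (hξ (Sum.inl i)) (IsConstrained.pd' hf _)

noncomputable def cfun (ξ : Param D) (j : Fin D) : DoubledSpace D → ℝ :=
  fun x => -(1/12) * ∑ i,
    (Lop ξ (ξ (Sum.inl i)) x * pd (ξ (Sum.inr i)) (Sum.inl j) x
     + Lop ξ (ξ (Sum.inr i)) x * pd (ξ (Sum.inl i)) (Sum.inl j) x)

lemma isConstrained_cfun {ξ : Param D} (hξ : IsConstrainedParam ξ) (j : Fin D) :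
    IsConstrained (cfun ξ j) :=
  IsConstrained.constMul _ (IsConstrained.sum' fun i =>
    IsConstrained.add'
      (IsConstrained.mul' (isConstrained_Lop hξ (hξ _)) (IsConstrained.pd' (hξ _) _))
      (IsConstrained.mul' (isConstrained_Lop hξ (hξ _)) (IsConstrained.pd' (hξ _) _)))

lemma xid_eq_Lop {ξ : Param D} (hξ : IsConstrainedParam ξ)
    {f : DoubledSpace D → ℝ} (hf : IsConstrained f) (x : DoubledSpace D) :
    xid ξ f x = Lop ξ f x := by
  unfold xid Lop
  rw [Fintype.sum_sum_type]
  have : ∑ i : Fin D, ξ (Sum.inr i) x * pd f (Sum.inr i) x = 0 := by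
    apply Finset.sum_eq_zero; intro i _; rw [pd_inr hf]; ring
  rw [this, add_zero]

end Aux16

namespace Aux16

variable {D : ℕ}

lemma pd_add {f g : DoubledSpace D → ℝ} (hf : ContDiff ℝ (⊤ : ℕ∞) f) (hg : ContDiff ℝ (⊤ : ℕ∞) g)
    (N : DoubledIdx D) (x : DoubledSpace D) :
    pd (fun y => f y + g y) N x = pd f N x + pd g N x := by
  unfold pd
  rw [fderiv_fun_add (hf.differentiable (by simp)).differentiableAt
      (hg.differentiable (by simp)).differentiableAt]
  simp

lemma pd_Lop {ξ : Param D} (hξ : IsConstrainedParam ξ)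
    {f : DoubledSpace D → ℝ} (hf : IsConstrained f) (N : DoubledIdx D) (x : DoubledSpace D) :
    pd (Lop ξ f) N x = ∑ i, (pd (ξ (Sum.inl i)) N x * pd f (Sum.inl i) x
      + ξ (Sum.inl i) x * pd (pd f (Sum.inl i)) N x) := by
  unfold Lop
  rw [pd_sum (fun i => ((hξ (Sum.inl i)).1).mul ((IsConstrained.pd' hf _).1))]
  exact Finset.sum_congr rfl fun i _ => pd_mul (hξ (Sum.inl i)).1 (IsConstrained.pd' hf _).1 N x

lemma Lop_pd {ξ : Param D} (hξ : IsConstrainedParam ξ)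
    {f : DoubledSpace D → ℝ} (hf : IsConstrained f) (N : DoubledIdx D) (x : DoubledSpace D) :
    Lop ξ (pd f N) x
      = pd (Lop ξ f) N x - ∑ k, pd (ξ (Sum.inl k)) N x * pd f (Sum.inl k) x := by
  rw [pd_Lop hξ hf, Finset.sum_add_distrib, add_sub_cancel_left]
  unfold Lop
  exact Finset.sum_congr rfl fun i _ => by rw [pd_comm hf.1]

lemma pd_cfun {ξ : Param D} (hξ : IsConstrainedParam ξ) (j : Fin D) (N : DoubledIdx D)
    (x : DoubledSpace D) :
    pd (cfun ξ j) N x = -(1/12) * ∑ i,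
      (pd (Lop ξ (ξ (Sum.inl i))) N x * pd (ξ (Sum.inr i)) (Sum.inl j) x
       + Lop ξ (ξ (Sum.inl i)) x * pd (pd (ξ (Sum.inr i)) (Sum.inl j)) N x
       + pd (Lop ξ (ξ (Sum.inr i))) N x * pd (ξ (Sum.inl i)) (Sum.inl j) x
       + Lop ξ (ξ (Sum.inr i)) x * pd (pd (ξ (Sum.inl i)) (Sum.inl j)) N x) := by
  have hsm : ∀ (P Q : DoubledIdx D), ContDiff ℝ (⊤ : ℕ∞)
      (fun y => Lop ξ (ξ P) y * pd (ξ Q) (Sum.inl j) y) :=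
    fun P Q => ((isConstrained_Lop hξ (hξ P)).1).mul ((IsConstrained.pd' (hξ Q) _).1)
  unfold cfun
  rw [pd_const_mul (ContDiff.sum fun i _ => (hsm (Sum.inl i) (Sum.inr i)).add
        (hsm (Sum.inr i) (Sum.inl i)))]
  congr 1
  rw [pd_sum (fun i => (hsm (Sum.inl i) (Sum.inr i)).add (hsm (Sum.inr i) (Sum.inl i)))]
  apply Finset.sum_congr rfl
  intro i _
  show pd (fun y => (fun y => Lop ξ (ξ (Sum.inl i)) y * pd (ξ (Sum.inr i)) (Sum.inl j) y) y
      + (fun y => Lop ξ (ξ (Sum.inr i)) y * pd (ξ (Sum.inl i)) (Sum.inl j) y) y) N x = _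
  rw [pd_add (hsm _ _) (hsm _ _), pd_mul (isConstrained_Lop hξ (hξ _)).1
      (IsConstrained.pd' (hξ _) _).1, pd_mul (isConstrained_Lop hξ (hξ _)).1
      (IsConstrained.pd' (hξ _) _).1]
  ring

end Aux16

namespace Aux16

variable {D : ℕ}

noncomputable def S1 (ξ : Param D) (m : Fin D) (x : DoubledSpace D) : ℝ :=
  ∑ j, (Lop ξ (Lop ξ (ξ (Sum.inl j))) x * pd (ξ (Sum.inr j)) (Sum.inl m) x
      + Lop ξ (Lop ξ (ξ (Sum.inr j))) x * pd (ξ (Sum.inl j)) (Sum.inl m) x)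

noncomputable def S2 (ξ : Param D) (m : Fin D) (x : DoubledSpace D) : ℝ :=
  ∑ j, (Lop ξ (ξ (Sum.inl j)) x * pd (Lop ξ (ξ (Sum.inr j))) (Sum.inl m) x
      + Lop ξ (ξ (Sum.inr j)) x * pd (Lop ξ (ξ (Sum.inl j))) (Sum.inl m) x)

noncomputable def S3 (ξ : Param D) (m : Fin D) (x : DoubledSpace D) : ℝ :=
  ∑ j, ∑ k, (Lop ξ (ξ (Sum.inl j)) x * (pd (ξ (Sum.inl k)) (Sum.inl m) x * pd (ξ (Sum.inr j)) (Sum.inl k) x)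
      + Lop ξ (ξ (Sum.inr j)) x * (pd (ξ (Sum.inl k)) (Sum.inl m) x * pd (ξ (Sum.inl j)) (Sum.inl k) x))

lemma reshuffle (g : Fin D → ℝ) (T : Fin D → Fin D → ℝ) (c : ℝ) :
    ∑ i, g i * (c * ∑ j, T i j) = c * ∑ j, ∑ i, g i * T i j := by
  calc ∑ i, g i * (c * ∑ j, T i j) = ∑ i, c * ∑ j, g i * T i j := by
        refine Finset.sum_congr rfl fun i _ => ?_
        rw [mul_left_comm, Finset.mul_sum]
    _ = c * ∑ i, ∑ j, g i * T i j := (Finset.mul_sum _ _ _).symm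
    _ = c * ∑ j, ∑ i, g i * T i j := by rw [Finset.sum_comm]

lemma E1 {ξ : Param D} (hξ : IsConstrainedParam ξ) (m : Fin D) (x : DoubledSpace D) :
    Lop ξ (cfun ξ m) x = -(1/12) * (S1 ξ m x + S2 ξ m x - S3 ξ m x) := by
  have step0 : Lop ξ (cfun ξ m) x
      = ∑ i, ξ (Sum.inl i) x * pd (cfun ξ m) (Sum.inl i) x := rfl
  rw [step0]
  simp only [pd_cfun hξ m]
  rw [reshuffle]
  unfold S1 S2 S3
  rw [← Finset.sum_add_distrib, ← Finset.sum_sub_distrib]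
  congr 1
  apply Finset.sum_congr rfl
  intro j _
  have hA : ∑ i, ξ (Sum.inl i) x *
        (pd (Lop ξ (ξ (Sum.inl j))) (Sum.inl i) x * pd (ξ (Sum.inr j)) (Sum.inl m) x)
      = Lop ξ (Lop ξ (ξ (Sum.inl j))) x * pd (ξ (Sum.inr j)) (Sum.inl m) x := by
    simp only [← mul_assoc]
    rw [← Finset.sum_mul]
    rfl
  have hC : ∑ i, ξ (Sum.inl i) x *
        (pd (Lop ξ (ξ (Sum.inr j))) (Sum.inl i) x * pd (ξ (Sum.inl j)) (Sum.inl m) x)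
      = Lop ξ (Lop ξ (ξ (Sum.inr j))) x * pd (ξ (Sum.inl j)) (Sum.inl m) x := by
    simp only [← mul_assoc]
    rw [← Finset.sum_mul]
    rfl
  have hB : ∑ i, ξ (Sum.inl i) x *
        (Lop ξ (ξ (Sum.inl j)) x * pd (pd (ξ (Sum.inr j)) (Sum.inl m)) (Sum.inl i) x)
      = Lop ξ (ξ (Sum.inl j)) x * (pd (Lop ξ (ξ (Sum.inr j))) (Sum.inl m) x
          - ∑ k, pd (ξ (Sum.inl k)) (Sum.inl m) x * pd (ξ (Sum.inr j)) (Sum.inl k) x) := by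
    calc ∑ i, ξ (Sum.inl i) x *
          (Lop ξ (ξ (Sum.inl j)) x * pd (pd (ξ (Sum.inr j)) (Sum.inl m)) (Sum.inl i) x)
        = ∑ i, Lop ξ (ξ (Sum.inl j)) x *
            (ξ (Sum.inl i) x * pd (pd (ξ (Sum.inr j)) (Sum.inl m)) (Sum.inl i) x) :=
          Finset.sum_congr rfl fun i _ => by ring
      _ = Lop ξ (ξ (Sum.inl j)) x *
            ∑ i, ξ (Sum.inl i) x * pd (pd (ξ (Sum.inr j)) (Sum.inl m)) (Sum.inl i) x :=
          (Finset.mul_sum _ _ _).symm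
      _ = Lop ξ (ξ (Sum.inl j)) x * Lop ξ (pd (ξ (Sum.inr j)) (Sum.inl m)) x := rfl
      _ = _ := by rw [Lop_pd hξ (hξ _)]
  have hE : ∑ i, ξ (Sum.inl i) x *
        (Lop ξ (ξ (Sum.inr j)) x * pd (pd (ξ (Sum.inl j)) (Sum.inl m)) (Sum.inl i) x)
      = Lop ξ (ξ (Sum.inr j)) x * (pd (Lop ξ (ξ (Sum.inl j))) (Sum.inl m) x
          - ∑ k, pd (ξ (Sum.inl k)) (Sum.inl m) x * pd (ξ (Sum.inl j)) (Sum.inl k) x) := by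
    calc ∑ i, ξ (Sum.inl i) x *
          (Lop ξ (ξ (Sum.inr j)) x * pd (pd (ξ (Sum.inl j)) (Sum.inl m)) (Sum.inl i) x)
        = ∑ i, Lop ξ (ξ (Sum.inr j)) x *
            (ξ (Sum.inl i) x * pd (pd (ξ (Sum.inl j)) (Sum.inl m)) (Sum.inl i) x) :=
          Finset.sum_congr rfl fun i _ => by ring
      _ = Lop ξ (ξ (Sum.inr j)) x *
            ∑ i, ξ (Sum.inl i) x * pd (pd (ξ (Sum.inl j)) (Sum.inl m)) (Sum.inl i) x :=
          (Finset.mul_sum _ _ _).symm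
      _ = Lop ξ (ξ (Sum.inr j)) x * Lop ξ (pd (ξ (Sum.inl j)) (Sum.inl m)) x := rfl
      _ = _ := by rw [Lop_pd hξ (hξ _)]
  calc ∑ i, ξ (Sum.inl i) x *
        (pd (Lop ξ (ξ (Sum.inl j))) (Sum.inl i) x * pd (ξ (Sum.inr j)) (Sum.inl m) x
         + Lop ξ (ξ (Sum.inl j)) x * pd (pd (ξ (Sum.inr j)) (Sum.inl m)) (Sum.inl i) x
         + pd (Lop ξ (ξ (Sum.inr j))) (Sum.inl i) x * pd (ξ (Sum.inl j)) (Sum.inl m) x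
         + Lop ξ (ξ (Sum.inr j)) x * pd (pd (ξ (Sum.inl j)) (Sum.inl m)) (Sum.inl i) x)
      = (∑ i, ξ (Sum.inl i) x *
          (pd (Lop ξ (ξ (Sum.inl j))) (Sum.inl i) x * pd (ξ (Sum.inr j)) (Sum.inl m) x))
        + (∑ i, ξ (Sum.inl i) x *
          (Lop ξ (ξ (Sum.inl j)) x * pd (pd (ξ (Sum.inr j)) (Sum.inl m)) (Sum.inl i) x))
        + (∑ i, ξ (Sum.inl i) x *
          (pd (Lop ξ (ξ (Sum.inr j))) (Sum.inl i) x * pd (ξ (Sum.inl j)) (Sum.inl m) x))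
        + (∑ i, ξ (Sum.inl i) x *
          (Lop ξ (ξ (Sum.inr j)) x * pd (pd (ξ (Sum.inl j)) (Sum.inl m)) (Sum.inl i) x)) := by
        simp only [mul_add, Finset.sum_add_distrib]
    _ = _ := by
        rw [hA, hB, hC, hE]
        rw [Finset.sum_add_distrib, ← Finset.mul_sum, ← Finset.mul_sum]
        ring

end Aux16

namespace Aux16

variable {D : ℕ}

lemma E2 {ξ : Param D} (hξ : IsConstrainedParam ξ) (m : Fin D) (x : DoubledSpace D) :
    ∑ i, ξ (Sum.inl i) x * pd (cfun ξ i) (Sum.inl m) x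
      = -(1/12) * (2 * S2 ξ m x - S3 ξ m x) := by
  have expand : ∀ i, pd (cfun ξ i) (Sum.inl m) x = -(1/12) * ∑ j,
      (pd (Lop ξ (ξ (Sum.inl j))) (Sum.inl m) x * pd (ξ (Sum.inr j)) (Sum.inl i) x
       + Lop ξ (ξ (Sum.inl j)) x * pd (pd (ξ (Sum.inr j)) (Sum.inl m)) (Sum.inl i) x
       + pd (Lop ξ (ξ (Sum.inr j))) (Sum.inl m) x * pd (ξ (Sum.inl j)) (Sum.inl i) x
       + Lop ξ (ξ (Sum.inr j)) x * pd (pd (ξ (Sum.inl j)) (Sum.inl m)) (Sum.inl i) x) := by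
    intro i
    rw [pd_cfun hξ i (Sum.inl m) x]
    congr 1
    apply Finset.sum_congr rfl
    intro j _
    rw [pd_comm (hξ (Sum.inr j)).1 (Sum.inl i) (Sum.inl m),
        pd_comm (hξ (Sum.inl j)).1 (Sum.inl i) (Sum.inl m)]
  simp only [expand]
  rw [reshuffle]
  congr 1
  unfold S2 S3
  rw [Finset.mul_sum, ← Finset.sum_sub_distrib]
  apply Finset.sum_congr rfl
  intro j _
  have hA : ∑ i, ξ (Sum.inl i) x *
        (pd (Lop ξ (ξ (Sum.inl j))) (Sum.inl m) x * pd (ξ (Sum.inr j)) (Sum.inl i) x)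
      = pd (Lop ξ (ξ (Sum.inl j))) (Sum.inl m) x * Lop ξ (ξ (Sum.inr j)) x := by
    calc ∑ i, ξ (Sum.inl i) x *
          (pd (Lop ξ (ξ (Sum.inl j))) (Sum.inl m) x * pd (ξ (Sum.inr j)) (Sum.inl i) x)
        = ∑ i, pd (Lop ξ (ξ (Sum.inl j))) (Sum.inl m) x *
            (ξ (Sum.inl i) x * pd (ξ (Sum.inr j)) (Sum.inl i) x) :=
          Finset.sum_congr rfl fun i _ => by ring
      _ = pd (Lop ξ (ξ (Sum.inl j))) (Sum.inl m) x *
            ∑ i, ξ (Sum.inl i) x * pd (ξ (Sum.inr j)) (Sum.inl i) x :=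
          (Finset.mul_sum _ _ _).symm
      _ = _ := rfl
  have hC : ∑ i, ξ (Sum.inl i) x *
        (pd (Lop ξ (ξ (Sum.inr j))) (Sum.inl m) x * pd (ξ (Sum.inl j)) (Sum.inl i) x)
      = pd (Lop ξ (ξ (Sum.inr j))) (Sum.inl m) x * Lop ξ (ξ (Sum.inl j)) x := by
    calc ∑ i, ξ (Sum.inl i) x *
          (pd (Lop ξ (ξ (Sum.inr j))) (Sum.inl m) x * pd (ξ (Sum.inl j)) (Sum.inl i) x)
        = ∑ i, pd (Lop ξ (ξ (Sum.inr j))) (Sum.inl m) x *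
            (ξ (Sum.inl i) x * pd (ξ (Sum.inl j)) (Sum.inl i) x) :=
          Finset.sum_congr rfl fun i _ => by ring
      _ = pd (Lop ξ (ξ (Sum.inr j))) (Sum.inl m) x *
            ∑ i, ξ (Sum.inl i) x * pd (ξ (Sum.inl j)) (Sum.inl i) x :=
          (Finset.mul_sum _ _ _).symm
      _ = _ := rfl
  have hB : ∑ i, ξ (Sum.inl i) x *
        (Lop ξ (ξ (Sum.inl j)) x * pd (pd (ξ (Sum.inr j)) (Sum.inl m)) (Sum.inl i) x)
      = Lop ξ (ξ (Sum.inl j)) x * (pd (Lop ξ (ξ (Sum.inr j))) (Sum.inl m) x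
          - ∑ k, pd (ξ (Sum.inl k)) (Sum.inl m) x * pd (ξ (Sum.inr j)) (Sum.inl k) x) := by
    calc ∑ i, ξ (Sum.inl i) x *
          (Lop ξ (ξ (Sum.inl j)) x * pd (pd (ξ (Sum.inr j)) (Sum.inl m)) (Sum.inl i) x)
        = ∑ i, Lop ξ (ξ (Sum.inl j)) x *
            (ξ (Sum.inl i) x * pd (pd (ξ (Sum.inr j)) (Sum.inl m)) (Sum.inl i) x) :=
          Finset.sum_congr rfl fun i _ => by ring
      _ = Lop ξ (ξ (Sum.inl j)) x *
            ∑ i, ξ (Sum.inl i) x * pd (pd (ξ (Sum.inr j)) (Sum.inl m)) (Sum.inl i) x :=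
          (Finset.mul_sum _ _ _).symm
      _ = Lop ξ (ξ (Sum.inl j)) x * Lop ξ (pd (ξ (Sum.inr j)) (Sum.inl m)) x := rfl
      _ = _ := by rw [Lop_pd hξ (hξ _)]
  have hE : ∑ i, ξ (Sum.inl i) x *
        (Lop ξ (ξ (Sum.inr j)) x * pd (pd (ξ (Sum.inl j)) (Sum.inl m)) (Sum.inl i) x)
      = Lop ξ (ξ (Sum.inr j)) x * (pd (Lop ξ (ξ (Sum.inl j))) (Sum.inl m) x
          - ∑ k, pd (ξ (Sum.inl k)) (Sum.inl m) x * pd (ξ (Sum.inl j)) (Sum.inl k) x) := by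
    calc ∑ i, ξ (Sum.inl i) x *
          (Lop ξ (ξ (Sum.inr j)) x * pd (pd (ξ (Sum.inl j)) (Sum.inl m)) (Sum.inl i) x)
        = ∑ i, Lop ξ (ξ (Sum.inr j)) x *
            (ξ (Sum.inl i) x * pd (pd (ξ (Sum.inl j)) (Sum.inl m)) (Sum.inl i) x) :=
          Finset.sum_congr rfl fun i _ => by ring
      _ = Lop ξ (ξ (Sum.inr j)) x *
            ∑ i, ξ (Sum.inl i) x * pd (pd (ξ (Sum.inl j)) (Sum.inl m)) (Sum.inl i) x :=
          (Finset.mul_sum _ _ _).symm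
      _ = Lop ξ (ξ (Sum.inr j)) x * Lop ξ (pd (ξ (Sum.inl j)) (Sum.inl m)) x := rfl
      _ = _ := by rw [Lop_pd hξ (hξ _)]
  calc ∑ i, ξ (Sum.inl i) x *
        (pd (Lop ξ (ξ (Sum.inl j))) (Sum.inl m) x * pd (ξ (Sum.inr j)) (Sum.inl i) x
         + Lop ξ (ξ (Sum.inl j)) x * pd (pd (ξ (Sum.inr j)) (Sum.inl m)) (Sum.inl i) x
         + pd (Lop ξ (ξ (Sum.inr j))) (Sum.inl m) x * pd (ξ (Sum.inl j)) (Sum.inl i) x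
         + Lop ξ (ξ (Sum.inr j)) x * pd (pd (ξ (Sum.inl j)) (Sum.inl m)) (Sum.inl i) x)
      = (∑ i, ξ (Sum.inl i) x *
          (pd (Lop ξ (ξ (Sum.inl j))) (Sum.inl m) x * pd (ξ (Sum.inr j)) (Sum.inl i) x))
        + (∑ i, ξ (Sum.inl i) x *
          (Lop ξ (ξ (Sum.inl j)) x * pd (pd (ξ (Sum.inr j)) (Sum.inl m)) (Sum.inl i) x))
        + (∑ i, ξ (Sum.inl i) x *
          (pd (Lop ξ (ξ (Sum.inr j))) (Sum.inl m) x * pd (ξ (Sum.inl j)) (Sum.inl i) x))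
        + (∑ i, ξ (Sum.inl i) x *
          (Lop ξ (ξ (Sum.inr j)) x * pd (pd (ξ (Sum.inl j)) (Sum.inl m)) (Sum.inl i) x)) := by
        simp only [mul_add, Finset.sum_add_distrib]
    _ = _ := by
        rw [hA, hB, hC, hE]
        rw [Finset.sum_add_distrib, ← Finset.mul_sum, ← Finset.mul_sum]
        ring

lemma E3 {ξ : Param D} (hξ : IsConstrainedParam ξ) (m : Fin D) (x : DoubledSpace D) :
    ∑ i, cfun ξ i x * pd (ξ (Sum.inl i)) (Sum.inl m) x = -(1/12) * S3 ξ m x := by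
  have expand : ∀ i, cfun ξ i x * pd (ξ (Sum.inl i)) (Sum.inl m) x
      = pd (ξ (Sum.inl i)) (Sum.inl m) x * (-(1/12) * ∑ j,
        (Lop ξ (ξ (Sum.inl j)) x * pd (ξ (Sum.inr j)) (Sum.inl i) x
         + Lop ξ (ξ (Sum.inr j)) x * pd (ξ (Sum.inl j)) (Sum.inl i) x)) := by
    intro i; unfold cfun; ring
  simp only [expand]
  rw [reshuffle]
  congr 1
  unfold S3
  apply Finset.sum_congr rfl
  intro j _
  apply Finset.sum_congr rfl
  intro k _
  ring

end Aux16

namespace Aux16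

variable {D : ℕ}

@[simp] lemma dual_inl (i : Fin D) : dual (Sum.inl i : DoubledIdx D) = Sum.inr i := rfl
@[simp] lemma dual_inr (i : Fin D) : dual (Sum.inr i : DoubledIdx D) = Sum.inl i := rfl

end Aux16

open Aux16

/-- The quartic cancellation ½[ξ,χ₃]_C = −χ₄, with
χ₃^M = −(1/12) Σ_P ((ξ·∂)ξ^P)(∂^M ξ_P) and χ₄^M = (1/24) Σ_P ((ξ·∂)²ξ^P)(∂^M ξ_P). -/
theorem stmt_16 {D : ℕ} (ξ χ₃ χ₄ : Param D) (hξ : IsConstrainedParam ξ)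
    (hχ₃ : ∀ M x, χ₃ M x = -(1/12) * ∑ P, xid ξ (ξ P) x * pdUpLow ξ M P x)
    (hχ₄ : ∀ M x, χ₄ M x = (1/24) * ∑ P, xidIter ξ 2 (ξ P) x * pdUpLow ξ M P x) :
    ∀ (M : DoubledIdx D) (x : DoubledSpace D),
      (1/2) * cbracket ξ χ₃ M x = - χ₄ M x := by
  have hχ₃inl : ∀ i, χ₃ (Sum.inl i) = fun _ => (0:ℝ) := by
    intro i; funext y; rw [hχ₃]
    rw [Finset.sum_eq_zero (fun P _ => by rw [pdUpLow_inl hξ]; ring)]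
    ring
  have hχ₃inr : ∀ j, χ₃ (Sum.inr j) = cfun ξ j := by
    intro j; funext y; rw [hχ₃]; unfold cfun; congr 1
    rw [Fintype.sum_sum_type]
    simp only [pdUpLow_inr, dual_inl, dual_inr]
    rw [← Finset.sum_add_distrib]
    apply Finset.sum_congr rfl
    intro i _
    rw [xid_eq_Lop hξ (hξ _), xid_eq_Lop hξ (hξ _)]
  have hχ₃c : IsConstrainedParam χ₃ := by
    intro M
    cases M with
    | inl i => rw [hχ₃inl]; exact isConstrained_const 0
    | inr j => rw [hχ₃inr]; exact isConstrained_cfun hξ j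
  have hχ₄inl : ∀ i y, χ₄ (Sum.inl i) y = 0 := by
    intro i y; rw [hχ₄]
    rw [Finset.sum_eq_zero (fun P _ => by rw [pdUpLow_inl hξ]; ring)]
    ring
  have hxid2 : ∀ P y, xidIter ξ 2 (ξ P) y = Lop ξ (Lop ξ (ξ P)) y := by
    intro P y
    show xid ξ (xidIter ξ 1 (ξ P)) y = _
    have h1 : xidIter ξ 1 (ξ P) = xid ξ (ξ P) := rfl
    have h2 : xid ξ (ξ P) = Lop ξ (ξ P) := funext fun z => xid_eq_Lop hξ (hξ P) z
    rw [h1, h2]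
    exact xid_eq_Lop hξ (isConstrained_Lop hξ (hξ P)) y
  have hχ₄inr : ∀ m y, χ₄ (Sum.inr m) y = (1/24) * S1 ξ m y := by
    intro m y; rw [hχ₄]; congr 1
    rw [Fintype.sum_sum_type]
    simp only [pdUpLow_inr, dual_inl, dual_inr, hxid2]
    unfold S1
    rw [← Finset.sum_add_distrib]
  intro M x
  cases M with
  | inl n =>
      rw [hχ₄inl n x]
      have hT : cbracket ξ χ₃ (Sum.inl n) x = 0 := by
        unfold cbracket
        have t1 : ∑ P, ξ P x * pd (χ₃ (Sum.inl n)) P x = 0 := by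
          apply Finset.sum_eq_zero; intro P _
          rw [hχ₃inl n, pd_zero]; ring
        have t2 : ∑ P, χ₃ P x * pd (ξ (Sum.inl n)) P x = 0 := by
          apply Finset.sum_eq_zero; intro P _
          cases P with
          | inl p => rw [hχ₃inl p]; simp
          | inr p => rw [pd_inr (hξ (Sum.inl n))]; ring
        have t3 : ∑ P, (ξ P x * pdUpLow χ₃ (Sum.inl n) P x
            - χ₃ P x * pdUpLow ξ (Sum.inl n) P x) = 0 := by
          apply Finset.sum_eq_zero; intro P _
          rw [pdUpLow_inl hχ₃c, pdUpLow_inl hξ]; ring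
        rw [t1, t2, t3]; ring
      rw [hT]; ring
  | inr m =>
      have t1 : ∑ P, ξ P x * pd (χ₃ (Sum.inr m)) P x = Lop ξ (cfun ξ m) x := by
        rw [hχ₃inr m, Fintype.sum_sum_type]
        have h0 : ∑ i : Fin D, ξ (Sum.inr i) x * pd (cfun ξ m) (Sum.inr i) x = 0 := by
          apply Finset.sum_eq_zero; intro i _
          rw [pd_inr (isConstrained_cfun hξ m)]; ring
        rw [h0, add_zero]
        rfl
      have t2 : ∑ P, χ₃ P x * pd (ξ (Sum.inr m)) P x = 0 := by
        apply Finset.sum_eq_zero; intro P _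
        cases P with
        | inl p => rw [hχ₃inl p]; simp
        | inr p => rw [pd_inr (hξ (Sum.inr m))]; ring
      have t3 : ∑ P, (ξ P x * pdUpLow χ₃ (Sum.inr m) P x
            - χ₃ P x * pdUpLow ξ (Sum.inr m) P x)
          = (∑ i, ξ (Sum.inl i) x * pd (cfun ξ i) (Sum.inl m) x)
            - (∑ i, cfun ξ i x * pd (ξ (Sum.inl i)) (Sum.inl m) x) := by
        rw [Fintype.sum_sum_type]
        have e1 : ∀ i : Fin D, ξ (Sum.inl i) x * pdUpLow χ₃ (Sum.inr m) (Sum.inl i) x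
            - χ₃ (Sum.inl i) x * pdUpLow ξ (Sum.inr m) (Sum.inl i) x
            = ξ (Sum.inl i) x * pd (cfun ξ i) (Sum.inl m) x := by
          intro i
          rw [pdUpLow_inr χ₃, pdUpLow_inr ξ]
          simp only [dual_inl]
          rw [hχ₃inr i, hχ₃inl i]
          simp
        have e2 : ∀ i : Fin D, ξ (Sum.inr i) x * pdUpLow χ₃ (Sum.inr m) (Sum.inr i) x
            - χ₃ (Sum.inr i) x * pdUpLow ξ (Sum.inr m) (Sum.inr i) x
            = -(cfun ξ i x * pd (ξ (Sum.inl i)) (Sum.inl m) x) := by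
          intro i
          rw [pdUpLow_inr χ₃, pdUpLow_inr ξ]
          simp only [dual_inr]
          rw [hχ₃inl i, hχ₃inr i, pd_zero]
          ring
        simp only [e1, e2]
        rw [Finset.sum_neg_distrib]
        ring
      have hcb : cbracket ξ χ₃ (Sum.inr m) x
          = Lop ξ (cfun ξ m) x - (1/2) *
            ((∑ i, ξ (Sum.inl i) x * pd (cfun ξ i) (Sum.inl m) x)
              - (∑ i, cfun ξ i x * pd (ξ (Sum.inl i)) (Sum.inl m) x)) := by
        unfold cbracket
        rw [t1, t2, t3]; ring
      rw [hcb, E1 hξ, E2 hξ, E3 hξ, hχ₄inr m x]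
      ring
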